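/- Let d, n, G be positive integers, R > 0, B₀ > 0, let v_0,…,v_{G−1} ∈ ℝ^{dn} and u_0,…,u_{G−1} ∈ ℝ^{dn}, and let Y_{i,j} ∈ ℝ^{d×n} (0 ≤ i,j ≤ G−1) be matrices all of whose entries lie in (−B₀, B₀). Then there exist two sum-of-linear-transformations layers Linear_K, Linear_Q and matrices W_K, W_Q, W_V, W_O of suitable dimensions such that for all Z_K, Z_Q ∈ ℝ^{d×n}, with Z̃_K, Z̃_Q ∈ ℝ^{dn} the column-stackings of Z_K, Z_Q: W_V·Linear_K(Z_K) · Softmax((W_K·Linear_K(Z_K))ᵀ · W_Q·Linear_Q(Z_Q)) · W_O = Σ_{i,j} (exp(R(v_iᵀZ̃_K + u_jᵀZ̃_Q − ½‖v_i‖₂² − ½‖u_j‖₂²)) / Σ_{i',j'} exp(R(v_{i'}ᵀZ̃_K + u_{j'}ᵀZ̃_Q − ½‖v_{i'}‖₂² − ½‖u_{j'}‖₂²))) · Y_{i,j}. -/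

import Mathlib

open Matrix

/-- Column-wise softmax of a real matrix. -/
noncomputable def softmax {a b : ℕ} (M : Matrix (Fin a) (Fin b) ℝ) :
    Matrix (Fin a) (Fin b) ℝ :=
  Matrix.of fun i j => Real.exp (M i j) / ∑ k, Real.exp (M k j)

/-- Column stacking of a `d × n` matrix into a vector of length `d*n`:
the entry at index `idx` is `Z (idx % d) (idx / d)`, so the columns
`z_1, …, z_n` are stacked in order. -/
def colStack {d n : ℕ} (hd : 0 < d) (Z : Matrix (Fin d) (Fin n) ℝ) :
    Fin (d * n) → ℝ :=
  fun idx => Z ⟨idx.1 % d, Nat.mod_lt _ hd⟩ ⟨idx.1 / d, Nat.div_lt_of_lt_mul idx.2⟩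

/-!
Key tokens are triples `(i, j, c)`: a pair of centres and a column of the output. Against query
column `q`, token `(i, j, c)` scores `s_ij + log 2 · [c = q]`, where `s_ij` is the mixture exponent;
this is a bilinear pairing of key features affine in `Z_K` with query features affine in `Z_Q`.
Column `q` of the softmax therefore weights the token by `e^{s_ij} (1 + [c = q]) / ((n + 1) Σ e^s)`.
The token's value is the centred column `(n + 1) Y_ij[:, c] - Σ_c' Y_ij[:, c']`, on which the
uniform part of that weight cancels and the doubled part returns `Y_ij[:, q]`. Finally, every
affine map of `Z` is a sum of terms `P Z Q` plus a bias (expand `Z` in matrix units).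
-/

namespace LinearMap

variable {R k l m p : Type*} [CommSemiring R] [Fintype k] [Fintype l] [Fintype m] [Fintype p]
  [DecidableEq k] [DecidableEq l] [DecidableEq m] [DecidableEq p]

theorem eq_sum_single_mul_mul_single (f : Matrix k l R →ₗ[R] Matrix m p R) (Z : Matrix k l R) :
    f Z = ∑ r, ∑ c, ∑ x, ∑ y,
      Matrix.single x r (1 : R) * Z * Matrix.single c y (f (Matrix.single r c 1) x y) := by
  conv_lhs => rw [Matrix.matrix_eq_sum_single Z]
  simp only [single_mul_mul_single, one_mul, map_sum]
  refine Finset.sum_congr rfl fun r _ => Finset.sum_congr rfl fun c _ => ?_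
  rw [show Matrix.single r c (Z r c) = Z r c • Matrix.single r c 1 by
      rw [smul_single, smul_eq_mul, mul_one], map_smul, Matrix.matrix_eq_sum_single (Z r c • f _)]
  simp only [Matrix.smul_apply, smul_eq_mul]

theorem exists_eq_sum_mul_mul (f : Matrix k l R →ₗ[R] Matrix m p R) :
    ∃ (H : ℕ) (P : Fin H → Matrix m k R) (Q : Fin H → Matrix l p R),
      ∀ Z, f Z = ∑ h, P h * Z * Q h := by
  let e := (Fintype.equivFin (k × l × m × p)).symm
  let P : k × l × m × p → Matrix m k R := fun t => Matrix.single t.2.2.1 t.1 1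
  let Q : k × l × m × p → Matrix l p R := fun t =>
    Matrix.single t.2.1 t.2.2.2 (f (Matrix.single t.1 t.2.1 1) t.2.2.1 t.2.2.2)
  refine ⟨_, P ∘ e, Q ∘ e, fun Z => ?_⟩
  calc f Z = ∑ t, P t * Z * Q t := by
        rw [eq_sum_single_mul_mul_single f Z]; simp only [P, Q, Fintype.sum_prod_type]
    _ = _ := (e.sum_comp _).symm

end LinearMap

open Real

section Attention

variable {a m₁ m₂ p₁ p₂ o q : Type*} [Fintype a] [Fintype m₁] [Fintype m₂] [Fintype p₁]
  [Fintype p₂]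

noncomputable def colSoftmax {m p : Type*} [Fintype m] (M : Matrix m p ℝ) : Matrix m p ℝ :=
  of fun i j => exp (M i j) / ∑ k, exp (M k j)

theorem colSoftmax_submatrix {m p m' p' : Type*} [Fintype m] [Fintype m'] (M : Matrix m p ℝ)
    (e : m' ≃ m) (f : p' → p) :
    colSoftmax (M.submatrix e f) = (colSoftmax M).submatrix e f := by
  ext i j
  simp only [colSoftmax, submatrix_apply, of_apply, e.sum_comp (fun k => exp (M k (f j)))]

noncomputable def crossAttention (WK : Matrix a m₁ ℝ) (WQ : Matrix a m₂ ℝ) (WV : Matrix o m₁ ℝ)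
    (WO : Matrix p₂ q ℝ) (ZK : Matrix m₁ p₁ ℝ) (ZQ : Matrix m₂ p₂ ℝ) : Matrix o q ℝ :=
  WV * ZK * colSoftmax ((WK * ZK)ᵀ * (WQ * ZQ)) * WO

theorem crossAttention_submatrix {a' m₁' m₂' p₁' p₂' : Type*} [Fintype a'] [Fintype m₁']
    [Fintype m₂'] [Fintype p₁'] [Fintype p₂'] (eA : a' ≃ a) (e₁ : m₁' ≃ m₁) (e₂ : m₂' ≃ m₂)
    (e₃ : p₁' ≃ p₁) (e₄ : p₂' ≃ p₂) (WK : Matrix a m₁ ℝ) (WQ : Matrix a m₂ ℝ)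
    (WV : Matrix o m₁ ℝ) (WO : Matrix p₂ q ℝ) (ZK : Matrix m₁ p₁ ℝ) (ZQ : Matrix m₂ p₂ ℝ) :
    crossAttention (WK.submatrix eA e₁) (WQ.submatrix eA e₂) (WV.submatrix id e₁)
        (WO.submatrix e₄ id) (ZK.submatrix e₁ e₃) (ZQ.submatrix e₂ e₄)
      = crossAttention WK WQ WV WO ZK ZQ := by
  simp [crossAttention, transpose_submatrix, colSoftmax_submatrix]

end Attention

def RealizedByCrossAttention {d n : ℕ}
    (F : Matrix (Fin d) (Fin n) ℝ → Matrix (Fin d) (Fin n) ℝ → Matrix (Fin d) (Fin n) ℝ) :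
    Prop :=
  ∃ (M₁ M₂ M₁' M₂' : ℕ)
      (HK : ℕ) (PK : Fin HK → Matrix (Fin M₁) (Fin d) ℝ)
      (QK : Fin HK → Matrix (Fin n) (Fin M₂) ℝ)
      (RbK : Matrix (Fin M₁) (Fin M₂) ℝ)
      (HQ : ℕ) (PQ : Fin HQ → Matrix (Fin M₁') (Fin d) ℝ)
      (QQ : Fin HQ → Matrix (Fin n) (Fin M₂') ℝ)
      (RbQ : Matrix (Fin M₁') (Fin M₂') ℝ)
      (dA : ℕ) (WK : Matrix (Fin dA) (Fin M₁) ℝ) (WQ : Matrix (Fin dA) (Fin M₁') ℝ)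
      (WV : Matrix (Fin d) (Fin M₁) ℝ)
      (WO : Matrix (Fin M₂') (Fin n) ℝ),
      ∀ ZK ZQ : Matrix (Fin d) (Fin n) ℝ,
        WV * (∑ i, PK i * ZK * QK i + RbK) *
            softmax ((WK * (∑ i, PK i * ZK * QK i + RbK))ᵀ *
              (WQ * (∑ i, PQ i * ZQ * QQ i + RbQ))) * WO
          = F ZK ZQ

theorem realizedByCrossAttention_of_linear {d n : ℕ} {a m₁ m₂ p₁ p₂ : Type*} [Fintype a]
    [Fintype m₁] [Fintype m₂] [Fintype p₁] [Fintype p₂] [DecidableEq m₁] [DecidableEq m₂]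
    [DecidableEq p₁] [DecidableEq p₂]
    {F : Matrix (Fin d) (Fin n) ℝ → Matrix (Fin d) (Fin n) ℝ → Matrix (Fin d) (Fin n) ℝ}
    (fK : Matrix (Fin d) (Fin n) ℝ →ₗ[ℝ] Matrix m₁ p₁ ℝ) (bK : Matrix m₁ p₁ ℝ)
    (fQ : Matrix (Fin d) (Fin n) ℝ →ₗ[ℝ] Matrix m₂ p₂ ℝ) (bQ : Matrix m₂ p₂ ℝ)
    (WK : Matrix a m₁ ℝ) (WQ : Matrix a m₂ ℝ) (WV : Matrix (Fin d) m₁ ℝ)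
    (WO : Matrix p₂ (Fin n) ℝ)
    (hF : ∀ ZK ZQ, crossAttention WK WQ WV WO (fK ZK + bK) (fQ ZQ + bQ) = F ZK ZQ) :
    RealizedByCrossAttention F := by
  let eA := (Fintype.equivFin a).symm
  let e₁ := (Fintype.equivFin m₁).symm
  let e₂ := (Fintype.equivFin m₂).symm
  let e₃ := (Fintype.equivFin p₁).symm
  let e₄ := (Fintype.equivFin p₂).symm
  obtain ⟨HK, PK, QK, hK⟩ :=
    ((reindexLinearEquiv ℝ ℝ e₁.symm e₃.symm).toLinearMap ∘ₗ fK).exists_eq_sum_mul_mul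
  obtain ⟨HQ, PQ, QQ, hQ⟩ :=
    ((reindexLinearEquiv ℝ ℝ e₂.symm e₄.symm).toLinearMap ∘ₗ fQ).exists_eq_sum_mul_mul
  refine ⟨_, _, _, _, HK, PK, QK, bK.submatrix e₁ e₃, HQ, PQ, QQ, bQ.submatrix e₂ e₄, _,
    WK.submatrix eA e₁, WQ.submatrix eA e₂, WV.submatrix id e₁, WO.submatrix e₄ id,
    fun ZK ZQ => ?_⟩
  have hXK : ∑ h, PK h * ZK * QK h + bK.submatrix e₁ e₃ = (fK ZK + bK).submatrix e₁ e₃ := by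
    rw [← hK]; rfl
  have hXQ : ∑ h, PQ h * ZQ * QQ h + bQ.submatrix e₂ e₄ = (fQ ZQ + bQ).submatrix e₂ e₄ := by
    rw [← hQ]; rfl
  rw [← hF, ← crossAttention_submatrix eA e₁ e₂ e₃ e₄, hXK, hXQ]
  rfl

section MarkedTokens

variable {ι κ o : Type*} [DecidableEq κ]

noncomputable def markedScores (s : ι → ℝ) : Matrix (ι × κ) κ ℝ :=
  of fun t q => s t.1 + if t.2 = q then log 2 else 0

def centeredValues [Fintype κ] (Y : ι → Matrix o κ ℝ) : Matrix o (ι × κ) ℝ :=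
  of fun r t => (Fintype.card κ + 1) * Y t.1 r t.2 - ∑ c, Y t.1 r c

theorem ite_two_one_eq (c q : κ) :
    (if c = q then (2 : ℝ) else 1) = 1 + if c = q then 1 else 0 := by
  split_ifs <;> norm_num

theorem sum_ite_two_one [Fintype κ] (q : κ) :
    ∑ c : κ, (if c = q then (2 : ℝ) else 1) = Fintype.card κ + 1 := by
  simp [ite_two_one_eq, Finset.sum_add_distrib]

theorem sum_centeredValues_mul_ite [Fintype κ] (Y : ι → Matrix o κ ℝ) (i : ι) (r : o) (q : κ) :
    ∑ c, centeredValues Y r (i, c) * (if c = q then 2 else 1)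
      = (Fintype.card κ + 1) * Y i r q := by
  simp only [centeredValues, of_apply, ite_two_one_eq, mul_add, mul_one, mul_ite, mul_zero,
    Finset.sum_add_distrib, Finset.sum_sub_distrib, ← Finset.mul_sum, Finset.sum_const,
    Finset.card_univ, nsmul_eq_mul, Finset.sum_ite_eq', Finset.mem_univ, if_true]
  ring

theorem exp_markedScores (s : ι → ℝ) (t : ι × κ) (q : κ) :
    exp (markedScores s t q) = exp (s t.1) * if t.2 = q then 2 else 1 := by
  rw [markedScores, of_apply, exp_add]
  split_ifs <;> simp [exp_log]

theorem colSoftmax_markedScores_apply [Fintype ι] [Fintype κ] (s : ι → ℝ) (t : ι × κ) (q : κ) :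
    colSoftmax (markedScores s) t q
      = exp (s t.1) * (if t.2 = q then 2 else 1) / ((Fintype.card κ + 1) * ∑ i, exp (s i)) := by
  simp only [colSoftmax, of_apply, exp_markedScores, Fintype.sum_prod_type, ← Finset.mul_sum,
    sum_ite_two_one, ← Finset.sum_mul, mul_comm]

theorem centeredValues_mul_colSoftmax_markedScores [Fintype ι] [Fintype κ] (Y : ι → Matrix o κ ℝ)
    (s : ι → ℝ) :
    centeredValues Y * colSoftmax (markedScores s : Matrix (ι × κ) κ ℝ)
      = ∑ i, (exp (s i) / ∑ j, exp (s j)) • Y i := by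
  ext r q
  have hN : (Fintype.card κ + 1 : ℝ) ≠ 0 := by positivity
  rw [Matrix.mul_apply, Fintype.sum_prod_type, Matrix.sum_apply]
  refine Finset.sum_congr rfl fun i _ => ?_
  set S := ∑ j, exp (s j)
  simp only [colSoftmax_markedScores_apply, Matrix.smul_apply, smul_eq_mul]
  calc ∑ c, centeredValues Y r (i, c) * (exp (s i) * (if c = q then 2 else 1)
          / ((Fintype.card κ + 1) * S))
      = exp (s i) / ((Fintype.card κ + 1) * S)
          * ∑ c, centeredValues Y r (i, c) * (if c = q then 2 else 1) := by
        rw [Finset.mul_sum _ _ (exp (s i) / _)]; exact Finset.sum_congr rfl fun c _ => by ring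
    _ = (Fintype.card κ + 1) * exp (s i) / ((Fintype.card κ + 1) * S) * Y i r q := by
        rw [sum_centeredValues_mul_ite]; ring
    _ = exp (s i) / S * Y i r q := by rw [mul_div_mul_left _ _ hN]

end MarkedTokens

theorem colStack_add {d n : ℕ} (hd : 0 < d) (Z Z' : Matrix (Fin d) (Fin n) ℝ) :
    colStack hd (Z + Z') = colStack hd Z + colStack hd Z' := rfl

theorem colStack_smul {d n : ℕ} (hd : 0 < d) (c : ℝ) (Z : Matrix (Fin d) (Fin n) ℝ) :
    colStack hd (c • Z) = c • colStack hd Z := rfl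

namespace MixtureAttention

variable {d n G : ℕ} (hd : 0 < d) (R : ℝ) (v u : Fin G → Fin (d * n) → ℝ)
  (Y : Fin G → Fin G → Matrix (Fin d) (Fin n) ℝ)

abbrev Feature (d n : ℕ) := Fin (d * n) ⊕ Fin n

abbrev Token (G n : ℕ) := (Fin G × Fin G) × Fin n

noncomputable def score (ZK ZQ : Matrix (Fin d) (Fin n) ℝ) (ij : Fin G × Fin G) : ℝ :=
  R * ((∑ t, v ij.1 t * colStack hd ZK t) + (∑ t, u ij.2 t * colStack hd ZQ t)
    - (∑ t, v ij.1 t ^ 2) / 2 - (∑ t, u ij.2 t ^ 2) / 2)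

noncomputable def keyFeatures (ZK : Matrix (Fin d) (Fin n) ℝ) :
    Matrix (Feature d n) (Token G n) ℝ :=
  fromRows (of fun t tok => u tok.1.2 t)
    (of fun c tok => R * ((∑ t, v tok.1.1 t * colStack hd ZK t) - (∑ t, v tok.1.1 t ^ 2) / 2
        - (∑ t, u tok.1.2 t ^ 2) / 2) + if tok.2 = c then log 2 else 0)

noncomputable def keyLayer (ZK : Matrix (Fin d) (Fin n) ℝ) :
    Matrix (Fin d ⊕ Feature d n) (Token G n) ℝ :=
  fromRows (centeredValues fun ij : Fin G × Fin G => Y ij.1 ij.2) (keyFeatures hd R v u ZK)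

def queryLayer (ZQ : Matrix (Fin d) (Fin n) ℝ) : Matrix (Feature d n) (Fin n) ℝ :=
  fromRows (of fun t _ => R * colStack hd ZQ t) 1

theorem keyFeatures_transpose_mul_queryLayer (ZK ZQ : Matrix (Fin d) (Fin n) ℝ) :
    (keyFeatures hd R v u ZK)ᵀ * queryLayer hd R ZQ = markedScores (score hd R v u ZK ZQ) := by
  ext tok q
  simp only [keyFeatures, queryLayer, transpose_fromRows, Matrix.mul_apply, Fintype.sum_sum_type,
    fromCols_apply_inl, fromCols_apply_inr, transpose_apply, fromRows_apply_inl, fromRows_apply_inr,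
    of_apply, Matrix.one_apply, mul_ite, mul_one, mul_zero, Finset.sum_ite_eq', Finset.mem_univ,
    if_true, markedScores, score, mul_left_comm _ R, ← Finset.mul_sum]
  ring

def valueWeight (d n : ℕ) : Matrix (Fin d) (Fin d ⊕ Feature d n) ℝ := fromCols 1 0

def keyWeight (d n : ℕ) : Matrix (Feature d n) (Fin d ⊕ Feature d n) ℝ := fromCols 0 1

theorem crossAttention_keyLayer_queryLayer (ZK ZQ : Matrix (Fin d) (Fin n) ℝ) :
    crossAttention (keyWeight d n) 1 (valueWeight d n) (1 : Matrix (Fin n) (Fin n) ℝ)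
        (keyLayer hd R v u Y ZK) (queryLayer hd R ZQ)
      = ∑ ij, (exp (score hd R v u ZK ZQ ij) / ∑ ij', exp (score hd R v u ZK ZQ ij'))
          • Y ij.1 ij.2 := by
  simp only [crossAttention, keyLayer, valueWeight, keyWeight, fromCols_mul_fromRows,
    Matrix.one_mul, Matrix.zero_mul, add_zero, zero_add, keyFeatures_transpose_mul_queryLayer,
    Matrix.mul_one]
  exact centeredValues_mul_colSoftmax_markedScores _ _

def keyLinear :
    Matrix (Fin d) (Fin n) ℝ →ₗ[ℝ] Matrix (Fin d ⊕ Feature d n) (Token G n) ℝ where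
  toFun Z := fromRows 0 (fromRows 0 (of fun _ t => R * (v t.1.1 ⬝ᵥ colStack hd Z)))
  map_add' Z Z' := by
    ext (_ | _ | _) _ <;> simp [colStack_add, dotProduct_add, mul_add]
  map_smul' c Z := by
    ext (_ | _ | _) _ <;> simp [colStack_smul, dotProduct_smul, mul_left_comm]

def queryLinear : Matrix (Fin d) (Fin n) ℝ →ₗ[ℝ] Matrix (Feature d n) (Fin n) ℝ where
  toFun Z := fromRows (of fun t _ => R * colStack hd Z t) 0
  map_add' Z Z' := by
    ext (_ | _) _ <;> simp [colStack_add, mul_add]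
  map_smul' c Z := by
    ext (_ | _) _ <;> simp [colStack_smul, mul_left_comm]

theorem keyLinear_add_keyLayer_zero (ZK : Matrix (Fin d) (Fin n) ℝ) :
    keyLinear hd R v ZK + keyLayer hd R v u Y 0 = keyLayer hd R v u Y ZK := by
  ext (r | t | c) tok
  · simp [keyLinear, keyLayer]
  · simp [keyLinear, keyLayer, keyFeatures]
  · simp only [keyLinear, keyLayer, keyFeatures, LinearMap.coe_mk, AddHom.coe_mk, dotProduct,
      colStack, Matrix.add_apply, fromRows_apply_inr, of_apply, Matrix.zero_apply, mul_zero,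
      Finset.sum_const_zero, zero_sub]
    ring

theorem queryLinear_add_queryLayer_zero (ZQ : Matrix (Fin d) (Fin n) ℝ) :
    queryLinear hd R ZQ + queryLayer hd R 0 = queryLayer hd R ZQ := by
  ext (_ | _) _ <;> simp [queryLinear, queryLayer, colStack]

end MixtureAttention

theorem crossattention_realizes_softmax_mixture_general
    (d n G : ℕ) (hd : 0 < d)
    (R : ℝ)
    (v u : Fin G → Fin (d * n) → ℝ)
    (Y : Fin G → Fin G → Matrix (Fin d) (Fin n) ℝ) :
    ∃ (M₁ M₂ M₁' M₂' : ℕ)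
      (HK : ℕ) (PK : Fin HK → Matrix (Fin M₁) (Fin d) ℝ)
      (QK : Fin HK → Matrix (Fin n) (Fin M₂) ℝ)
      (RbK : Matrix (Fin M₁) (Fin M₂) ℝ)
      (HQ : ℕ) (PQ : Fin HQ → Matrix (Fin M₁') (Fin d) ℝ)
      (QQ : Fin HQ → Matrix (Fin n) (Fin M₂') ℝ)
      (RbQ : Matrix (Fin M₁') (Fin M₂') ℝ)
      (dA : ℕ) (WK : Matrix (Fin dA) (Fin M₁) ℝ) (WQ : Matrix (Fin dA) (Fin M₁') ℝ)
      (WV : Matrix (Fin d) (Fin M₁) ℝ)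
      (WO : Matrix (Fin M₂') (Fin n) ℝ),
      ∀ ZK ZQ : Matrix (Fin d) (Fin n) ℝ,
        WV * (∑ i, PK i * ZK * QK i + RbK) *
            softmax ((WK * (∑ i, PK i * ZK * QK i + RbK))ᵀ *
              (WQ * (∑ i, PQ i * ZQ * QQ i + RbQ))) * WO
          = ∑ i : Fin G, ∑ j : Fin G,
              (Real.exp (R * ((∑ t, v i t * colStack hd ZK t)
                  + (∑ t, u j t * colStack hd ZQ t)
                  - (∑ t, v i t ^ 2) / 2 - (∑ t, u j t ^ 2) / 2)) /
                ∑ i' : Fin G, ∑ j' : Fin G,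
                  Real.exp (R * ((∑ t, v i' t * colStack hd ZK t)
                    + (∑ t, u j' t * colStack hd ZQ t)
                    - (∑ t, v i' t ^ 2) / 2 - (∑ t, u j' t ^ 2) / 2))) • Y i j := by
  open MixtureAttention in
  exact realizedByCrossAttention_of_linear (keyLinear hd R v) (keyLayer hd R v u Y 0)
    (queryLinear hd R) (queryLayer hd R 0) (keyWeight d n) 1 (valueWeight d n) 1 fun ZK ZQ => by
      rw [keyLinear_add_keyLayer_zero, queryLinear_add_queryLayer_zero,
        crossAttention_keyLayer_queryLayer]
      simp only [Fintype.sum_prod_type, score]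

/-- **Single-head cross-attention exactly realizes a softmax mixture of fixed matrices.**
Given `R > 0`, centers `v_i, u_j ∈ ℝ^{dn}` and matrices `Y_{i,j} ∈ ℝ^{d×n}` with
entries in `(−B₀, B₀)`, there are two sum-of-linear-transformations layers
`Linear_K, Linear_Q` and weights `W_K, W_Q, W_V, W_O` such that for all `Z_K, Z_Q`,
the cross-attention output
`W_V·Linear_K(Z_K)·Softmax((W_K·Linear_K(Z_K))ᵀ·(W_Q·Linear_Q(Z_Q)))·W_O`
equals the softmax mixture `∑_{i,j} w_{i,j}(Z̃_K, Z̃_Q) · Y_{i,j}` with additively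
combined scores `v_iᵀZ̃_K + u_jᵀZ̃_Q − ½‖v_i‖² − ½‖u_j‖²` at inverse temperature `R`,
`Z̃` denoting column stacking. -/
theorem crossattention_realizes_softmax_mixture
    (d n G : ℕ) (hd : 0 < d) (hn : 0 < n) (hG : 0 < G)
    (R B₀ : ℝ) (hR : 0 < R) (hB₀ : 0 < B₀)
    (v u : Fin G → Fin (d * n) → ℝ)
    (Y : Fin G → Fin G → Matrix (Fin d) (Fin n) ℝ)
    (hY : ∀ i j r c, -B₀ < Y i j r c ∧ Y i j r c < B₀) :
    ∃ (M₁ M₂ M₁' M₂' : ℕ)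
      (HK : ℕ) (PK : Fin HK → Matrix (Fin M₁) (Fin d) ℝ)
      (QK : Fin HK → Matrix (Fin n) (Fin M₂) ℝ)
      (RbK : Matrix (Fin M₁) (Fin M₂) ℝ)
      (HQ : ℕ) (PQ : Fin HQ → Matrix (Fin M₁') (Fin d) ℝ)
      (QQ : Fin HQ → Matrix (Fin n) (Fin M₂') ℝ)
      (RbQ : Matrix (Fin M₁') (Fin M₂') ℝ)
      (dA : ℕ) (WK : Matrix (Fin dA) (Fin M₁) ℝ) (WQ : Matrix (Fin dA) (Fin M₁') ℝ)
      (WV : Matrix (Fin d) (Fin M₁) ℝ)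
      (WO : Matrix (Fin M₂') (Fin n) ℝ),
      ∀ ZK ZQ : Matrix (Fin d) (Fin n) ℝ,
        WV * (∑ i, PK i * ZK * QK i + RbK) *
            softmax ((WK * (∑ i, PK i * ZK * QK i + RbK))ᵀ *
              (WQ * (∑ i, PQ i * ZQ * QQ i + RbQ))) * WO
          = ∑ i : Fin G, ∑ j : Fin G,
              (Real.exp (R * ((∑ t, v i t * colStack hd ZK t)
                  + (∑ t, u j t * colStack hd ZQ t)
                  - (∑ t, v i t ^ 2) / 2 - (∑ t, u j t ^ 2) / 2)) /
                ∑ i' : Fin G, ∑ j' : Fin G,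
                  Real.exp (R * ((∑ t, v i' t * colStack hd ZK t)
                    + (∑ t, u j' t * colStack hd ZQ t)
                    - (∑ t, v i' t ^ 2) / 2 - (∑ t, u j' t ^ 2) / 2))) • Y i j :=
  crossattention_realizes_softmax_mixture_general d n G hd R v u Y
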